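/- A 2-((sk-s+1)k, k, 1) design D admits a set of (sk-k+1)·s pairwise compatible resolutions if and only if there exists a projective plane of order q = sk in which D is embeddable as a maximal arc of degree k (i.e., the point set of D maps to a set of (sk-s+1)k points of the plane meeting every line in k or 0 points, with blocks being the nonempty line intersections). -/

import Mathlib

/-!
Given the resolutions, adjoin the parallel classes occurring in them as new points and the
resolutions themselves as new lines. Two of the resolutions share exactly one class and two
classes share at most one block, so the classes through a block, minus that block, pack the
blocks disjoint from it; this bounds the number of classes. Combined with the counts of
classes and of pairs of resolutions, Cauchy–Schwarz then forces every class to lie in exactly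
`s` resolutions. The incidence counts are then those of a projective plane of order `sk` in
which two points lie on at most one line, and such a structure is a projective plane; the
points of the design form a maximal arc in it. Conversely, each point off a maximal arc
gives a parallel class (the blocks on lines through it), and the `(sk - k + 1) s` lines
missing the arc give pairwise compatible resolutions.
-/

/-- A Steiner 2-((sk-s+1)k, k, 1) design: point set of size (s·k-s+1)·k,
blocks of size k, every pair of distinct points in exactly one block. -/
structure ArcDesign (α : Type*) [DecidableEq α] where
  s : ℕ
  k : ℕ
  X : Finset α
  B : Finset (Finset α)
  card_X : X.card = (s * k - s + 1) * k
  blocks_sub : ∀ b ∈ B, b ⊆ X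
  blocks_card : ∀ b ∈ B, b.card = k
  pair_balance : ∀ x ∈ X, ∀ y ∈ X, x ≠ y → ∃! b, b ∈ B ∧ x ∈ b ∧ y ∈ b

/-- A parallel class: blocks of the design partitioning the point set. -/
def IsParallelClass {α : Type*} [DecidableEq α] (D : ArcDesign α)
    (C : Finset (Finset α)) : Prop :=
  C ⊆ D.B ∧ (∀ x ∈ D.X, ∃! b, b ∈ C ∧ x ∈ b)

/-- A resolution: a partition of the block collection into parallel classes. -/
def IsResolution {α : Type*} [DecidableEq α] (D : ArcDesign α)
    (R : Finset (Finset (Finset α))) : Prop :=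
  (∀ C ∈ R, IsParallelClass D C) ∧ (∀ b ∈ D.B, ∃! C, C ∈ R ∧ b ∈ C)

/-- Two resolutions are compatible if they share a parallel class `C`, and any
other pair of classes, one from each resolution, has at most one common
block. -/
def Compatible {α : Type*} [DecidableEq α] (D : ArcDesign α)
    (R₁ R₂ : Finset (Finset (Finset α))) : Prop :=
  ∃ C, C ∈ R₁ ∧ C ∈ R₂ ∧
    ∀ C₁ ∈ R₁, ∀ C₂ ∈ R₂, ¬(C₁ = C ∧ C₂ = C) → (C₁ ∩ C₂).card ≤ 1

/-- A finite projective plane of order `q`. -/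
structure ProjPlane (P L : Type) where
  finP : Finite P
  finL : Finite L
  incid : P → L → Prop
  q : ℕ
  join : ∀ p₁ p₂ : P, p₁ ≠ p₂ → ∃! l : L, incid p₁ l ∧ incid p₂ l
  meet : ∀ l₁ l₂ : L, l₁ ≠ l₂ → ∃! p : P, incid p l₁ ∧ incid p l₂
  point_deg : ∀ p : P, {l : L | incid p l}.ncard = q + 1
  line_deg : ∀ l : L, {p : P | incid p l}.ncard = q + 1

/-- The point set of a line. -/
def ProjPlane.lineSet {P L : Type} (Pl : ProjPlane P L) (l : L) : Set P :=
  {p : P | Pl.incid p l}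

/-- `D` is embeddable in the plane `Pl` as a maximal arc of degree `k` via an
injection of its points whose image meets every line in `k` or `0` points,
the blocks of `D` being exactly the nonempty line intersections. -/
def EmbeddableAsMaxArc {α : Type} [DecidableEq α] (D : ArcDesign α)
    {P L : Type} (Pl : ProjPlane P L) : Prop :=
  ∃ f : α → P, Set.InjOn f ↑D.X ∧
    (∀ l : L, (Pl.lineSet l ∩ f '' ↑D.X).ncard = D.k ∨
      (Pl.lineSet l ∩ f '' ↑D.X).ncard = 0) ∧
    (∀ b : Finset α, b ∈ D.B ↔ b ⊆ D.X ∧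
      (f '' ↑b).Nonempty ∧ ∃ l : L, f '' ↑b = Pl.lineSet l ∩ f '' ↑D.X)

open Finset

theorem Finset.card_filter_eq_one_iff {β : Type*} {s : Finset β} {p : β → Prop}
    [DecidablePred p] : #{a ∈ s | p a} = 1 ↔ ∃! a, a ∈ s ∧ p a := by
  simp only [card_eq_one_iff_existsUnique, mem_filter]

theorem Finset.eq_of_sum_sq_add_le {ι : Type*} {s : Finset ι} {d : ι → ℕ} {c : ℕ}
    (h : ∑ i ∈ s, d i ^ 2 + #s * c ^ 2 ≤ 2 * c * ∑ i ∈ s, d i) {i : ι} (hi : i ∈ s) :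
    d i = c := by
  have hvar : ∑ j ∈ s, ((d j : ℤ) - c) ^ 2 = 0 := by
    refine le_antisymm ?_ (sum_nonneg fun j _ => sq_nonneg _)
    have hexpand : ∑ j ∈ s, ((d j : ℤ) - c) ^ 2
        = ∑ j ∈ s, (d j : ℤ) ^ 2 + #s * (c : ℤ) ^ 2 - 2 * c * ∑ j ∈ s, (d j : ℤ) := by
      have hsq : ∀ j, ((d j : ℤ) - c) ^ 2 = (d j : ℤ) ^ 2 + (c : ℤ) ^ 2 - 2 * c * d j :=
        fun j => by ring
      simp only [hsq, sum_sub_distrib, sum_add_distrib, sum_const, nsmul_eq_mul, ← mul_sum]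
    rw [hexpand, sub_nonpos]
    exact_mod_cast h
  have := (sum_eq_zero_iff_of_nonneg fun j _ => sq_nonneg ((d j : ℤ) - c)).mp hvar i hi
  exact_mod_cast sub_eq_zero.mp (pow_eq_zero_iff two_ne_zero |>.mp this)

theorem Set.ncard_setOf_sum {A B : Type*} [Finite A] [Finite B] (p : A ⊕ B → Prop) :
    {x | p x}.ncard = {a | p (.inl a)}.ncard + {b | p (.inr b)}.ncard :=
  (Nat.card_congr Equiv.subtypeSum).trans Nat.card_sum

theorem Finset.ncard_setOf_subtype {β : Type*} (s : Finset β) (p : β → Prop) [DecidablePred p] :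
    {x : s | p x}.ncard = #{x ∈ s | p x} := by
  rw [← Set.ncard_coe_finset, ← Set.ncard_image_of_injective _ Subtype.val_injective]
  congr 1
  ext x
  simp [and_comm]

theorem Set.InjOn.finset_eq_of_image_eq {α β : Type*} {f : α → β} {s : Finset α}
    (hinj : Set.InjOn f s) {b b' : Finset α} (hb : b ⊆ s) (hb' : b' ⊆ s)
    (h : f '' b = f '' b') : b = b' :=
  coe_injective ((hinj.image_eq_image_iff (mod_cast hb) (mod_cast hb')).mp h)

section IncidenceCounting

variable {P L : Type*} (I : P → L → Prop)

/-- The lines through `p`, each with `p` removed, are disjoint and cover the points collinear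
with `p`. -/
theorem ncard_collinear_ne [Finite P] [Finite L]
    (hunique : ∀ p p' l l', I p l → I p' l → I p l' → I p' l' → p = p' ∨ l = l')
    {p : P} {b : ℕ} (hline : ∀ l, I p l → {x | I x l}.ncard = b) :
    {x | x ≠ p ∧ ∃ l, I p l ∧ I x l}.ncard = {l | I p l}.ncard * (b - 1) := by
  classical
  have := Fintype.ofFinite P
  have := Fintype.ofFinite L
  simp only [← coe_filter_univ, Set.ncard_coe_finset] at hline ⊢
  have hcover : ({x | x ≠ p ∧ ∃ l, I p l ∧ I x l} : Finset P)
      = ({l | I p l} : Finset L).biUnion fun l => ({x | I x l} : Finset P).erase p := by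
    ext x
    simp only [mem_filter, mem_univ, true_and, mem_biUnion, mem_erase]
    exact ⟨fun ⟨hx, l, hpl, hxl⟩ => ⟨l, hpl, hx, hxl⟩, fun ⟨l, hpl, hx, hxl⟩ => ⟨hx, l, hpl, hxl⟩⟩
  rw [hcover, card_biUnion, sum_const_nat]
  · intro l hl
    rw [mem_filter] at hl
    rw [card_erase_of_mem (by simpa using hl.2), hline l hl.2]
  · intro l hl l' hl' hne
    simp only [mem_coe, mem_filter] at hl hl'
    refine disjoint_left.mpr fun x hx hx' => ?_
    simp only [mem_erase, mem_filter] at hx hx'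
    exact (hunique x p l l' hx.2.2 hl.2 hx'.2.2 hl'.2).elim hx.1 hne

/-- With the counts of a projective plane of order `q`, the lines through `p` already cover
all `q * q + q + 1` points. -/
theorem exists_incid_of_ncard [Finite P] [Finite L]
    (hunique : ∀ p p' l l', I p l → I p' l → I p l' → I p' l' → p = p' ∨ l = l')
    {q : ℕ} (hpoint : ∀ p, {l | I p l}.ncard = q + 1) (hline : ∀ l, {p | I p l}.ncard = q + 1)
    (hcard : Nat.card P = q * q + q + 1) {p p' : P} (hne : p' ≠ p) :
    ∃ l, I p l ∧ I p' l := by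
  have hcount := ncard_collinear_ne I hunique (p := p) fun l _ => hline l
  rw [hpoint, Nat.add_sub_cancel] at hcount
  have hall : {x | x ≠ p ∧ ∃ l, I p l ∧ I x l} = {p}ᶜ := by
    refine Set.eq_of_subset_of_ncard_le (fun x hx => hx.1) ?_
    rw [hcount, Set.ncard_compl, hcard, Set.ncard_singleton, Nat.add_sub_cancel]
    exact le_of_eq (by ring)
  have hp' : p' ∈ {x | x ≠ p ∧ ∃ l, I p l ∧ I x l} := hall ▸ hne
  exact hp'.2

end IncidenceCounting

def ProjPlane.ofIncidence {P L : Type} [Finite P] [Finite L] (I : P → L → Prop) (q : ℕ)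
    (hunique : ∀ p p' l l', I p l → I p' l → I p l' → I p' l' → p = p' ∨ l = l')
    (hpoint : ∀ p, {l | I p l}.ncard = q + 1) (hline : ∀ l, {p | I p l}.ncard = q + 1)
    (hP : Nat.card P = q * q + q + 1) (hL : Nat.card L = q * q + q + 1) : ProjPlane P L where
  finP := ‹_›
  finL := ‹_›
  incid := I
  q := q
  join p₁ p₂ hne := existsUnique_of_exists_of_unique
    (exists_incid_of_ncard I hunique hpoint hline hP hne.symm)
    fun _ _ h h' => (hunique p₁ p₂ _ _ h.1 h.2 h'.1 h'.2).resolve_left hne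
  meet l₁ l₂ hne := existsUnique_of_exists_of_unique
    (exists_incid_of_ncard (flip I)
      (fun l l' p p' h₁ h₂ h₃ h₄ => (hunique p p' l l' h₁ h₃ h₂ h₄).symm) hline hpoint hL hne.symm)
    fun _ _ h h' => (hunique _ _ l₁ l₂ h.1 h'.1 h.2 h'.2).resolve_right hne
  point_deg := hpoint
  line_deg := hline

namespace ProjPlane

variable {P L : Type} (Pl : ProjPlane P L)

theorem eq_or_eq_of_incid {p p' : P} {l l' : L} (h₁ : Pl.incid p l) (h₂ : Pl.incid p' l)
    (h₃ : Pl.incid p l') (h₄ : Pl.incid p' l') : p = p' ∨ l = l' := by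
  by_cases hne : p = p'
  · exact .inl hne
  · exact .inr ((Pl.join p p' hne).unique ⟨h₁, h₂⟩ ⟨h₃, h₄⟩)

theorem natCard_lines (l₀ : L) : Nat.card L = Pl.q * Pl.q + Pl.q + 1 := by
  have := Pl.finP
  have := Pl.finL
  have hcount := ncard_collinear_ne (flip Pl.incid)
    (fun l l' p p' h₁ h₂ h₃ h₄ => (Pl.eq_or_eq_of_incid h₁ h₃ h₂ h₄).symm) (p := l₀)
    fun p _ => Pl.point_deg p
  have hall : {l | l ≠ l₀ ∧ ∃ p, Pl.incid p l₀ ∧ Pl.incid p l} = {l₀}ᶜ :=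
    Set.ext fun l => ⟨fun h => h.1, fun h => ⟨h, (Pl.meet l₀ l (Ne.symm h)).exists⟩⟩
  dsimp only [flip] at hcount
  rw [hall, Set.ncard_compl, Set.ncard_singleton, Pl.line_deg, Nat.add_sub_cancel] at hcount
  have : 0 < Nat.card L := Nat.card_pos_iff.mpr ⟨⟨l₀⟩, ‹_›⟩
  rw [← Nat.sub_add_cancel this, hcount]
  ring

theorem exists_incid_ne (hq : 0 < Pl.q) (l : L) (p : P) : ∃ p', Pl.incid p' l ∧ p' ≠ p := by
  have := Pl.finP
  exact Set.exists_ne_of_one_lt_ncard (s := {p' | Pl.incid p' l}) (by rw [Pl.line_deg]; omega) p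

end ProjPlane

namespace ArcDesign

variable {α : Type*} [DecidableEq α] (D : ArcDesign α)

theorem eq_of_mem_of_mem {x y : α} (hxy : x ≠ y) {b b' : Finset α} (hb : b ∈ D.B)
    (hb' : b' ∈ D.B) (hx : x ∈ b) (hy : y ∈ b) (hx' : x ∈ b') (hy' : y ∈ b') : b = b' :=
  (D.pair_balance x (D.blocks_sub b hb hx) y (D.blocks_sub b hb hy) hxy).unique
    ⟨hb, hx, hy⟩ ⟨hb', hx', hy'⟩

theorem nonempty_of_mem (hk : 0 < D.k) {b : Finset α} (hb : b ∈ D.B) : b.Nonempty :=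
  card_pos.mp (by rw [D.blocks_card b hb]; exact hk)

theorem card_inter_le_one {b b' : Finset α} (hb : b ∈ D.B) (hb' : b' ∈ D.B) (hne : b ≠ b') :
    #(b ∩ b') ≤ 1 := by
  refine card_le_one.mpr fun x hx y hy => ?_
  rw [mem_inter] at hx hy
  by_contra hxy
  exact hne (D.eq_of_mem_of_mem hxy hb hb' hx.1 hy.1 hx.2 hy.2)

theorem card_blocks_through (hk : 2 ≤ D.k) {x : α} (hx : x ∈ D.X) :
    #{b ∈ D.B | x ∈ b} = D.s * D.k + 1 := by
  have hcount := card_mul_eq_card_mul (fun y b => y ∈ b) (s := D.X.erase x)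
    (t := {b ∈ D.B | x ∈ b}) (m := 1) (n := D.k - 1)
    (fun y hy => by
      rw [mem_erase] at hy
      simp only [bipartiteAbove, filter_filter]
      exact card_filter_eq_one_iff.mpr (by
        simpa only [and_assoc] using D.pair_balance x hx y hy.2 (Ne.symm hy.1)))
    (fun b hb => by
      rw [mem_filter] at hb
      have : {y ∈ D.X.erase x | y ∈ b} = b.erase x := by
        ext y
        simp only [mem_filter, mem_erase]
        exact ⟨fun h => ⟨h.1.1, h.2⟩, fun h => ⟨⟨h.1, D.blocks_sub b hb.1 h.2⟩, h.2⟩⟩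
      rw [bipartiteBelow, this, card_erase_of_mem hb.2, D.blocks_card b hb.1])
  rw [card_erase_of_mem hx, D.card_X, mul_one] at hcount
  have hX : (D.s * D.k - D.s + 1) * D.k - 1 = (D.s * D.k + 1) * (D.k - 1) := by
    have h₁ : D.s ≤ D.s * D.k := Nat.le_mul_of_pos_right _ (by omega)
    have h₂ : 1 ≤ (D.s * D.k - D.s + 1) * D.k := Nat.mul_pos (by omega) (by omega)
    zify [h₁, h₂, (by omega : 1 ≤ D.k)]
    ring
  exact (Nat.eq_of_mul_eq_mul_right (by omega) (hX.symm.trans hcount)).symm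

theorem card_blocks (hk : 2 ≤ D.k) : #D.B = (D.s * D.k - D.s + 1) * (D.s * D.k + 1) := by
  have hcount := card_mul_eq_card_mul (fun x b => x ∈ b) (s := D.X) (t := D.B)
    (fun x hx => D.card_blocks_through hk hx)
    (fun b hb => by
      rw [bipartiteBelow, filter_mem_eq_inter, inter_eq_right.mpr (D.blocks_sub b hb),
        D.blocks_card b hb])
  rw [D.card_X, mul_right_comm] at hcount
  exact Nat.eq_of_mul_eq_mul_right (by omega) hcount.symm

/-- Each of the `k` points of `b` lies on `s * k` further blocks, and these meet `b` only there. -/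
theorem card_blocks_meeting (hk : 2 ≤ D.k) {b : Finset α} (hb : b ∈ D.B) :
    #{b' ∈ D.B.erase b | ¬Disjoint b b'} = D.k * (D.s * D.k) := by
  have hcount := card_mul_eq_card_mul (fun x b' => x ∈ b') (s := b)
    (t := {b' ∈ D.B.erase b | ¬Disjoint b b'}) (n := 1)
    (fun x hx => by
      have : {b' ∈ {b' ∈ D.B.erase b | ¬Disjoint b b'} | x ∈ b'} = {b' ∈ D.B | x ∈ b'}.erase b := by
        ext b'
        simp only [mem_filter, mem_erase, not_disjoint_iff]
        exact ⟨fun h => ⟨h.1.1.1, h.1.1.2, h.2⟩, fun h => ⟨⟨⟨h.1, h.2.1⟩, x, hx, h.2.2⟩, h.2.2⟩⟩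
      rw [bipartiteAbove, this, card_erase_of_mem (mem_filter.mpr ⟨hb, hx⟩),
        D.card_blocks_through hk (D.blocks_sub b hb hx), Nat.add_sub_cancel])
    (fun b' hb' => by
      simp only [mem_filter, mem_erase] at hb'
      rw [bipartiteBelow, filter_mem_eq_inter]
      exact le_antisymm (D.card_inter_le_one hb hb'.1.2 (Ne.symm hb'.1.1))
        (card_pos.mpr (not_disjoint_iff_nonempty_inter.mp hb'.2)))
  rw [D.blocks_card b hb, mul_one] at hcount
  exact hcount.symm

theorem card_blocks_disjoint (hs : 0 < D.s) (hk : 2 ≤ D.k) {b : Finset α} (hb : b ∈ D.B) :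
    #{b' ∈ D.B | Disjoint b b'} = (D.s * D.k - D.s) * (D.s * D.k - D.k + 1) := by
  have hb_self : ¬Disjoint b b := by
    rw [disjoint_self_iff_empty]
    exact (D.nonempty_of_mem (by omega) hb).ne_empty
  have hsplit := card_filter_add_card_filter_not (s := D.B.erase b) (p := fun b' => Disjoint b b')
  have herase : {b' ∈ D.B.erase b | Disjoint b b'} = {b' ∈ D.B | Disjoint b b'} := by
    rw [filter_erase, erase_eq_of_notMem (fun h => hb_self (mem_filter.mp h).2)]
  rw [herase, D.card_blocks_meeting hk hb, card_erase_of_mem hb, D.card_blocks hk] at hsplit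
  have h₁ : D.s ≤ D.s * D.k := Nat.le_mul_of_pos_right _ (by omega)
  have h₂ : D.k ≤ D.s * D.k := Nat.le_mul_of_pos_left _ hs
  have h₃ : 1 ≤ (D.s * D.k - D.s + 1) * (D.s * D.k + 1) := Nat.mul_pos (by omega) (by omega)
  zify [h₁, h₂, h₃] at hsplit ⊢
  linear_combination hsplit

end ArcDesign

section Resolutions

variable {α : Type*} [DecidableEq α] {D : ArcDesign α}

namespace IsParallelClass

variable {C : Finset (Finset α)}

theorem eq_of_mem (hC : IsParallelClass D C) {b b' : Finset α} (hb : b ∈ C) (hb' : b' ∈ C)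
    {x : α} (hx : x ∈ b) (hx' : x ∈ b') : b = b' :=
  (hC.2 x (D.blocks_sub b (hC.1 hb) hx)).unique ⟨hb, hx⟩ ⟨hb', hx'⟩

theorem card_eq (hC : IsParallelClass D C) (hk : 0 < D.k) : #C = D.s * D.k - D.s + 1 := by
  have hcount := card_mul_eq_card_mul (fun x b => x ∈ b) (s := D.X) (t := C)
    (fun x hx => card_filter_eq_one_iff.mpr (hC.2 x hx))
    (fun b hb => by
      rw [bipartiteBelow, filter_mem_eq_inter, inter_eq_right.mpr (D.blocks_sub b (hC.1 hb)),
        D.blocks_card b (hC.1 hb)])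
  rw [D.card_X, mul_one] at hcount
  exact (Nat.eq_of_mul_eq_mul_right hk hcount).symm

end IsParallelClass

namespace IsResolution

variable {R : Finset (Finset (Finset α))}

theorem eq_of_mem (hR : IsResolution D R) {C C' : Finset (Finset α)} (hC : C ∈ R)
    (hC' : C' ∈ R) {b : Finset α} (hb : b ∈ C) (hb' : b ∈ C') : C = C' :=
  (hR.2 b ((hR.1 C hC).1 hb)).unique ⟨hC, hb⟩ ⟨hC', hb'⟩

theorem card_eq (hR : IsResolution D R) (hk : 2 ≤ D.k) : #R = D.s * D.k + 1 := by
  have hcount := card_mul_eq_card_mul (fun b C => b ∈ C) (s := D.B) (t := R)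
    (fun b hb => card_filter_eq_one_iff.mpr (hR.2 b hb))
    (fun C hC => by
      rw [bipartiteBelow, filter_mem_eq_inter, inter_eq_right.mpr (hR.1 C hC).1,
        (hR.1 C hC).card_eq (by omega)])
  rw [D.card_blocks hk, mul_one, mul_comm] at hcount
  exact (Nat.eq_of_mul_eq_mul_right (by omega) hcount).symm

end IsResolution

end Resolutions

section CompatibleFamily

variable {α : Type*} [DecidableEq α]

structure IsCompatibleFamily (D : ArcDesign α) (S : Finset (Finset (Finset (Finset α)))) :
    Prop where
  isResolution : ∀ R ∈ S, IsResolution D R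
  compatible : ∀ R₁ ∈ S, ∀ R₂ ∈ S, R₁ ≠ R₂ → Compatible D R₁ R₂

def classesOf (S : Finset (Finset (Finset (Finset α)))) : Finset (Finset (Finset α)) :=
  S.biUnion id

variable {D : ArcDesign α} {S : Finset (Finset (Finset (Finset α)))}

theorem mem_classesOf {C : Finset (Finset α)} : C ∈ classesOf S ↔ ∃ R ∈ S, C ∈ R := by
  simp [classesOf]

theorem subset_classesOf {R : Finset (Finset (Finset α))} (hR : R ∈ S) : R ⊆ classesOf S :=
  fun _ hC => mem_classesOf.mpr ⟨R, hR, hC⟩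

namespace IsCompatibleFamily

theorem isParallelClass (hS : IsCompatibleFamily D S) {C : Finset (Finset α)}
    (hC : C ∈ classesOf S) : IsParallelClass D C := by
  obtain ⟨R, hR, hCR⟩ := mem_classesOf.mp hC
  exact (hS.isResolution R hR).1 C hCR

theorem card_inter_eq_one (hS : IsCompatibleFamily D S) (hs : 0 < D.s) (hk : 2 ≤ D.k)
    {R₁ R₂ : Finset (Finset (Finset α))} (hR₁ : R₁ ∈ S) (hR₂ : R₂ ∈ S) (hne : R₁ ≠ R₂) :
    #(R₁ ∩ R₂) = 1 := by
  obtain ⟨C, hC₁, hC₂, hle⟩ := hS.compatible R₁ hR₁ R₂ hR₂ hne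
  refine card_eq_one.mpr ⟨C, eq_singleton_iff_unique_mem.mpr ⟨mem_inter.mpr ⟨hC₁, hC₂⟩, ?_⟩⟩
  intro C' hC'
  rw [mem_inter] at hC'
  by_contra hne'
  have h := hle C' hC'.1 C' hC'.2 fun h => hne' h.1
  rw [inter_self, ((hS.isResolution R₁ hR₁).1 C' hC'.1).card_eq (by omega)] at h
  have : D.s * 2 ≤ D.s * D.k := Nat.mul_le_mul_left _ hk
  omega

theorem resolution_eq_of_mem_of_mem (hS : IsCompatibleFamily D S) (hs : 0 < D.s)
    (hk : 2 ≤ D.k) {R₁ R₂ : Finset (Finset (Finset α))} (hR₁ : R₁ ∈ S) (hR₂ : R₂ ∈ S)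
    {C C' : Finset (Finset α)} (hne : C ≠ C') (hC₁ : C ∈ R₁) (hC'₁ : C' ∈ R₁) (hC₂ : C ∈ R₂)
    (hC'₂ : C' ∈ R₂) : R₁ = R₂ := by
  by_contra hR
  exact hne (card_le_one.mp (hS.card_inter_eq_one hs hk hR₁ hR₂ hR).le C
    (mem_inter.mpr ⟨hC₁, hC₂⟩) C' (mem_inter.mpr ⟨hC'₁, hC'₂⟩))

theorem card_inter_le_one (hS : IsCompatibleFamily D S) {C₁ C₂ : Finset (Finset α)}
    (hC₁ : C₁ ∈ classesOf S) (hC₂ : C₂ ∈ classesOf S) (hne : C₁ ≠ C₂) : #(C₁ ∩ C₂) ≤ 1 := by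
  obtain ⟨R₁, hR₁, hC₁R⟩ := mem_classesOf.mp hC₁
  obtain ⟨R₂, hR₂, hC₂R⟩ := mem_classesOf.mp hC₂
  by_cases hR : R₁ = R₂
  · subst hR
    refine card_le_one.mpr fun b hb _ _ => absurd ?_ hne
    rw [mem_inter] at hb
    exact (hS.isResolution R₁ hR₁).eq_of_mem hC₁R hC₂R hb.1 hb.2
  · obtain ⟨C, -, -, hle⟩ := hS.compatible R₁ hR₁ R₂ hR₂ hR
    exact hle C₁ hC₁R C₂ hC₂R fun h => hne (h.1.trans h.2.symm)

theorem eq_of_mem_of_mem (hS : IsCompatibleFamily D S) {C C' : Finset (Finset α)}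
    (hC : C ∈ classesOf S) (hC' : C' ∈ classesOf S) {b b' : Finset α} (hne : b ≠ b')
    (hb : b ∈ C) (hb' : b' ∈ C) (hbC' : b ∈ C') (hb'C' : b' ∈ C') : C = C' := by
  by_contra hCC
  exact hne (card_le_one.mp (hS.card_inter_le_one hC hC' hCC) b (mem_inter.mpr ⟨hb, hbC'⟩) b'
    (mem_inter.mpr ⟨hb', hb'C'⟩))

/-- The classes through `b`, with `b` removed, are disjoint sets of blocks disjoint from `b`. -/
theorem card_classes_through_le (hS : IsCompatibleFamily D S) (hs : 0 < D.s) (hk : 2 ≤ D.k)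
    {b : Finset α} (hb : b ∈ D.B) :
    #{C ∈ classesOf S | b ∈ C} ≤ D.s * D.k - D.k + 1 := by
  have hcount := card_mul_le_card_mul (fun C b' => b' ∈ C) (s := {C ∈ classesOf S | b ∈ C})
    (t := {b' ∈ D.B | Disjoint b b'}) (m := D.s * D.k - D.s) (n := 1)
    (fun C hC => by
      rw [mem_filter] at hC
      have hP := hS.isParallelClass hC.1
      calc D.s * D.k - D.s = #(C.erase b) := by
            rw [card_erase_of_mem hC.2, hP.card_eq (by omega), Nat.add_sub_cancel]
        _ ≤ _ := card_le_card fun b' hb' => by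
            rw [mem_erase] at hb'
            refine mem_filter.mpr ⟨mem_filter.mpr ⟨hP.1 hb'.2, ?_⟩, hb'.2⟩
            exact disjoint_left.mpr fun x hx hx' => hb'.1 (hP.eq_of_mem hb'.2 hC.2 hx' hx))
    (fun b' hb' => by
      rw [mem_filter] at hb'
      have hne : b ≠ b' := by
        rintro rfl
        rw [disjoint_self_iff_empty] at hb'
        exact (D.nonempty_of_mem (by omega) hb).ne_empty hb'.2
      refine card_le_one.mpr fun C hC C' hC' => ?_
      simp only [bipartiteBelow, mem_filter] at hC hC'
      exact hS.eq_of_mem_of_mem hC.1.1 hC'.1.1 hne hC.1.2 hC.2 hC'.1.2 hC'.2)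
  rw [D.card_blocks_disjoint hs hk hb, mul_one, mul_comm] at hcount
  have : D.s * 2 ≤ D.s * D.k := Nat.mul_le_mul_left _ hk
  exact Nat.le_of_mul_le_mul_left hcount (by omega)

-- `mult` in the names below is the multiplicity `#{R ∈ S | C ∈ R}` of a class `C`.

theorem sum_mult (hS : IsCompatibleFamily D S) (hk : 2 ≤ D.k) :
    ∑ C ∈ classesOf S, #{R ∈ S | C ∈ R} = #S * (D.s * D.k + 1) := by
  rw [← sum_const_nat fun R hR => (hS.isResolution R hR).card_eq hk]
  refine (sum_card_bipartiteAbove_eq_sum_card_bipartiteBelow (fun C R => C ∈ R)).trans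
    (sum_congr rfl fun R hR => ?_)
  rw [bipartiteBelow, filter_mem_eq_inter, inter_eq_right.mpr (subset_classesOf hR)]

/-- Every other resolution of `S` shares exactly one class with `R`. -/
theorem sum_mult_of_mem (hS : IsCompatibleFamily D S) (hs : 0 < D.s) (hk : 2 ≤ D.k)
    {R : Finset (Finset (Finset α))} (hR : R ∈ S) :
    ∑ C ∈ R, #{R' ∈ S | C ∈ R'} = #S + D.s * D.k := by
  calc ∑ C ∈ R, #{R' ∈ S | C ∈ R'} = ∑ R' ∈ S, #{C ∈ R | C ∈ R'} :=
        sum_card_bipartiteAbove_eq_sum_card_bipartiteBelow _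
    _ = #(R ∩ R) + ∑ R' ∈ S.erase R, #(R ∩ R') := by
        simp only [filter_mem_eq_inter]
        exact (add_sum_erase _ _ hR).symm
    _ = #S + D.s * D.k := by
        rw [sum_congr rfl fun R' hR' => hS.card_inter_eq_one hs hk hR (mem_of_mem_erase hR')
            (ne_of_mem_erase hR').symm, sum_const_nat fun _ _ => rfl, card_erase_of_mem hR,
          inter_self, (hS.isResolution R hR).card_eq hk]
        have : 0 < #S := card_pos.mpr ⟨R, hR⟩
        omega

theorem sum_mult_sq (hS : IsCompatibleFamily D S) (hs : 0 < D.s) (hk : 2 ≤ D.k) :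
    ∑ C ∈ classesOf S, #{R ∈ S | C ∈ R} ^ 2 = #S * (#S + D.s * D.k) := by
  calc ∑ C ∈ classesOf S, #{R ∈ S | C ∈ R} ^ 2
      = ∑ C ∈ classesOf S, ∑ _R ∈ {R ∈ S | C ∈ R}, #{R' ∈ S | C ∈ R'} := by
        simp only [sum_const, smul_eq_mul, sq]
    _ = ∑ R ∈ S, ∑ C ∈ R, #{R' ∈ S | C ∈ R'} :=
        sum_comm' fun C R => by
          simp only [mem_filter]
          exact ⟨fun h => ⟨h.2.2, h.2.1⟩, fun h => ⟨subset_classesOf h.2 h.1, h.2, h.1⟩⟩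
    _ = #S * (#S + D.s * D.k) := by
        rw [sum_congr rfl fun R hR => hS.sum_mult_of_mem hs hk hR, sum_const, smul_eq_mul]

theorem card_classesOf_le (hS : IsCompatibleFamily D S) (hs : 0 < D.s) (hk : 2 ≤ D.k) :
    #(classesOf S) ≤ (D.s * D.k + 1) * (D.s * D.k - D.k + 1) := by
  have hcount := card_mul_le_card_mul (fun C b => b ∈ C) (s := classesOf S) (t := D.B)
    (m := D.s * D.k - D.s + 1) (n := D.s * D.k - D.k + 1)
    (fun C hC => by
      have hP := hS.isParallelClass hC
      rw [bipartiteAbove, filter_mem_eq_inter, inter_eq_right.mpr hP.1, hP.card_eq (by omega)])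
    (fun b hb => hS.card_classes_through_le hs hk hb)
  rw [D.card_blocks hk, mul_assoc, mul_comm] at hcount
  exact Nat.le_of_mul_le_mul_left hcount (by omega)

/-- Equality in Cauchy–Schwarz: the multiplicities sum to `#S * (s * k + 1)`, their squares to
`#S * (#S + s * k)`, and there are at most `(s * k + 1) * (s * k - k + 1)` classes. -/
theorem mult_eq (hS : IsCompatibleFamily D S) (hs : 0 < D.s) (hk : 2 ≤ D.k)
    (hcard : #S = (D.s * D.k - D.k + 1) * D.s) {C : Finset (Finset α)}
    (hC : C ∈ classesOf S) : #{R ∈ S | C ∈ R} = D.s := by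
  refine eq_of_sum_sq_add_le (d := fun C => #{R ∈ S | C ∈ R}) ?_ hC
  have hN := Nat.mul_le_mul_right (D.s ^ 2) (hS.card_classesOf_le hs hk)
  have hkey : #S * (#S + D.s * D.k) + (D.s * D.k + 1) * (D.s * D.k - D.k + 1) * D.s ^ 2
      = 2 * D.s * (#S * (D.s * D.k + 1)) := by
    have : D.k ≤ D.s * D.k := Nat.le_mul_of_pos_left _ hs
    rw [hcard]
    zify [this]
    ring
  rw [hS.sum_mult_sq hs hk, hS.sum_mult hk, ← hkey]
  exact Nat.add_le_add_left hN _

theorem sum_mult_classes_through (hS : IsCompatibleFamily D S) {b : Finset α} (hb : b ∈ D.B) :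
    ∑ C ∈ {C ∈ classesOf S | b ∈ C}, #{R ∈ S | C ∈ R} = #S := by
  calc ∑ C ∈ {C ∈ classesOf S | b ∈ C}, #{R ∈ S | C ∈ R}
      = ∑ R ∈ S, #{C ∈ {C ∈ classesOf S | b ∈ C} | C ∈ R} :=
        sum_card_bipartiteAbove_eq_sum_card_bipartiteBelow _
    _ = ∑ R ∈ S, 1 := sum_congr rfl fun R hR => by
        have : {C ∈ {C ∈ classesOf S | b ∈ C} | C ∈ R} = {C ∈ R | b ∈ C} := by
          ext C
          simp only [mem_filter]
          exact ⟨fun h => ⟨h.2, h.1.2⟩, fun h => ⟨⟨subset_classesOf hR h.1, h.2⟩, h.1⟩⟩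
        rw [this]
        exact card_filter_eq_one_iff.mpr ((hS.isResolution R hR).2 b hb)
    _ = #S := (card_eq_sum_ones S).symm

theorem card_classes_through (hS : IsCompatibleFamily D S) (hs : 0 < D.s) (hk : 2 ≤ D.k)
    (hcard : #S = (D.s * D.k - D.k + 1) * D.s) {b : Finset α} (hb : b ∈ D.B) :
    #{C ∈ classesOf S | b ∈ C} = D.s * D.k - D.k + 1 := by
  have h := hS.sum_mult_classes_through hb
  rw [sum_congr rfl fun C hC => hS.mult_eq hs hk hcard (mem_filter.mp hC).1, sum_const,
    smul_eq_mul, hcard] at h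
  exact Nat.eq_of_mul_eq_mul_right hs h

theorem card_classesOf (hS : IsCompatibleFamily D S) (hs : 0 < D.s) (hk : 2 ≤ D.k)
    (hcard : #S = (D.s * D.k - D.k + 1) * D.s) :
    #(classesOf S) = (D.s * D.k + 1) * (D.s * D.k - D.k + 1) := by
  have h := hS.sum_mult hk
  rw [sum_congr rfl fun C hC => hS.mult_eq hs hk hcard hC, sum_const, smul_eq_mul, hcard,
    mul_right_comm, mul_comm _ (D.s * D.k + 1)] at h
  exact Nat.eq_of_mul_eq_mul_right hs h

end IsCompatibleFamily

end CompatibleFamily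

section ArcEmbedding

variable {α : Type} [DecidableEq α] {P L : Type} (D : ArcDesign α) (Pl : ProjPlane P L)
  (f : α → P)

open Classical in
noncomputable def lineTrace (l : L) : Finset α := {x ∈ D.X | Pl.incid (f x) l}

structure IsArcEmbedding : Prop where
  injOn : Set.InjOn f D.X
  lineTrace_mem : ∀ l, (lineTrace D Pl f l).Nonempty → lineTrace D Pl f l ∈ D.B
  exists_lineTrace_eq : ∀ b ∈ D.B, ∃ l, lineTrace D Pl f l = b

variable {D Pl f}

theorem mem_lineTrace {l : L} {x : α} : x ∈ lineTrace D Pl f l ↔ x ∈ D.X ∧ Pl.incid (f x) l := by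
  classical
  rw [lineTrace, mem_filter]

theorem lineTrace_subset (l : L) : lineTrace D Pl f l ⊆ D.X := fun _ hx => (mem_lineTrace.mp hx).1

theorem image_lineTrace (l : L) : f '' lineTrace D Pl f l = Pl.lineSet l ∩ f '' D.X := by
  ext p
  simp only [Set.mem_image, mem_coe, mem_lineTrace, Set.mem_inter_iff, ProjPlane.lineSet,
    Set.mem_ofPred_eq]
  constructor
  · rintro ⟨x, ⟨hx, hxl⟩, rfl⟩
    exact ⟨hxl, x, hx, rfl⟩
  · rintro ⟨hpl, x, hx, rfl⟩
    exact ⟨x, ⟨hx, hpl⟩, rfl⟩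

theorem embeddableAsMaxArc_iff (hk : 0 < D.k) :
    EmbeddableAsMaxArc D Pl ↔ ∃ f, IsArcEmbedding D Pl f := by
  constructor
  · rintro ⟨f, hinj, -, hblocks⟩
    refine ⟨f, hinj, fun l hl => ?_, fun b hb => ?_⟩
    · exact (hblocks _).mpr ⟨lineTrace_subset l, (coe_nonempty.mpr hl).image f, l,
        image_lineTrace l⟩
    · obtain ⟨hsub, -, l, heq⟩ := (hblocks b).mp hb
      exact ⟨l, hinj.finset_eq_of_image_eq (lineTrace_subset l) hsub
        ((image_lineTrace l).trans heq.symm)⟩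
  · rintro ⟨f, hf⟩
    have hcard : ∀ b ∈ D.B, (f '' b).ncard = D.k := fun b hb => by
      rw [(hf.injOn.mono (coe_subset.mpr (D.blocks_sub b hb))).ncard_image,
        Set.ncard_coe_finset, D.blocks_card b hb]
    refine ⟨f, hf.injOn, fun l => ?_, fun b => ⟨fun hb => ?_, ?_⟩⟩
    · rw [← image_lineTrace]
      obtain hl | hl := (lineTrace D Pl f l).eq_empty_or_nonempty
      · simp [hl]
      · exact .inl (hcard _ (hf.lineTrace_mem l hl))
    · obtain ⟨l, rfl⟩ := hf.exists_lineTrace_eq b hb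
      exact ⟨lineTrace_subset l, (coe_nonempty.mpr (D.nonempty_of_mem hk hb)).image f, l,
        image_lineTrace l⟩
    · rintro ⟨hsub, hne, l, heq⟩
      obtain rfl := hf.injOn.finset_eq_of_image_eq hsub (lineTrace_subset l)
        (heq.trans (image_lineTrace l).symm)
      exact hf.lineTrace_mem l (coe_nonempty.mp (Set.image_nonempty.mp hne))

end ArcEmbedding

section PlaneOfResolutions

variable {α : Type} [DecidableEq α] (D : ArcDesign α) (S : Finset (Finset (Finset (Finset α))))

abbrev PlanePoint : Type := {x // x ∈ D.X} ⊕ {C // C ∈ classesOf S}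

abbrev PlaneLine : Type := {b // b ∈ D.B} ⊕ {R // R ∈ S}

def planeIncid : PlanePoint D S → PlaneLine D S → Prop
  | .inl x, .inl b => x.1 ∈ b.1
  | .inl _, .inr _ => False
  | .inr C, .inl b => b.1 ∈ C.1
  | .inr C, .inr R => C.1 ∈ R.1

variable {D S}

theorem planeIncid_unique (hS : IsCompatibleFamily D S) (hs : 0 < D.s) (hk : 2 ≤ D.k) :
    ∀ p p' l l', planeIncid D S p l → planeIncid D S p' l → planeIncid D S p l' →
      planeIncid D S p' l' → p = p' ∨ l = l'
  | .inl x, .inl x', .inl b, .inl b', h₁, h₂, h₃, h₄ => by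
    by_cases hxy : x = x'
    · exact .inl (congrArg _ hxy)
    · exact .inr (congrArg _ (Subtype.ext (D.eq_of_mem_of_mem (fun h => hxy (Subtype.ext h))
        b.2 b'.2 h₁ h₂ h₃ h₄)))
  | .inl _, .inr C', .inl b, .inl b', h₁, h₂, h₃, h₄ =>
    .inr (congrArg _ (Subtype.ext ((hS.isParallelClass C'.2).eq_of_mem h₂ h₄ h₁ h₃)))
  | .inr C, .inl _, .inl b, .inl b', h₁, h₂, h₃, h₄ =>
    .inr (congrArg _ (Subtype.ext ((hS.isParallelClass C.2).eq_of_mem h₁ h₃ h₂ h₄)))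
  | .inr C, .inr C', .inl b, .inl b', h₁, h₂, h₃, h₄ => by
    by_cases hbb : b = b'
    · exact .inr (congrArg _ hbb)
    · exact .inl (congrArg _ (Subtype.ext (hS.eq_of_mem_of_mem C.2 C'.2
        (fun h => hbb (Subtype.ext h)) h₁ h₃ h₂ h₄)))
  | .inr _, .inr _, .inl _, .inr R', h₁, h₂, h₃, h₄ =>
    .inl (congrArg _ (Subtype.ext ((hS.isResolution R'.1 R'.2).eq_of_mem h₃ h₄ h₁ h₂)))
  | .inr _, .inr _, .inr R, .inl _, h₁, h₂, h₃, h₄ =>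
    .inl (congrArg _ (Subtype.ext ((hS.isResolution R.1 R.2).eq_of_mem h₁ h₂ h₃ h₄)))
  | .inr C, .inr C', .inr R, .inr R', h₁, h₂, h₃, h₄ => by
    by_cases hCC : C = C'
    · exact .inl (congrArg _ hCC)
    · exact .inr (congrArg _ (Subtype.ext (hS.resolution_eq_of_mem_of_mem hs hk R.2 R'.2
        (fun h => hCC (Subtype.ext h)) h₁ h₂ h₃ h₄)))
  | .inl _, _, .inr _, _, h₁, _, _, _ => h₁.elim
  | _, .inl _, .inr _, _, _, h₂, _, _ => h₂.elim
  | .inl _, _, _, .inr _, _, _, h₃, _ => h₃.elim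
  | _, .inl _, _, .inr _, _, _, _, h₄ => h₄.elim

theorem ncard_planeIncid_point (hS : IsCompatibleFamily D S) (hs : 0 < D.s) (hk : 2 ≤ D.k)
    (hcard : #S = (D.s * D.k - D.k + 1) * D.s) :
    ∀ p, {l | planeIncid D S p l}.ncard = D.s * D.k + 1
  | .inl x => by
    simp only [Set.ncard_setOf_sum, planeIncid, Set.ofPred_false, Set.ncard_empty, add_zero]
    rw [ncard_setOf_subtype D.B (x.1 ∈ ·)]
    exact D.card_blocks_through hk x.2
  | .inr C => by
    have hP := hS.isParallelClass C.2
    simp only [Set.ncard_setOf_sum, planeIncid]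
    rw [ncard_setOf_subtype D.B (· ∈ C.1), ncard_setOf_subtype S (C.1 ∈ ·), filter_mem_eq_inter,
      inter_eq_right.mpr hP.1, hP.card_eq (by omega), hS.mult_eq hs hk hcard C.2]
    have : D.s ≤ D.s * D.k := Nat.le_mul_of_pos_right _ (by omega)
    omega

theorem ncard_planeIncid_line (hS : IsCompatibleFamily D S) (hs : 0 < D.s) (hk : 2 ≤ D.k)
    (hcard : #S = (D.s * D.k - D.k + 1) * D.s) :
    ∀ l, {p | planeIncid D S p l}.ncard = D.s * D.k + 1
  | .inl b => by
    simp only [Set.ncard_setOf_sum, planeIncid]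
    rw [ncard_setOf_subtype D.X (· ∈ b.1), ncard_setOf_subtype (classesOf S) (b.1 ∈ ·),
      filter_mem_eq_inter, inter_eq_right.mpr (D.blocks_sub b.1 b.2), D.blocks_card b.1 b.2,
      hS.card_classes_through hs hk hcard b.2]
    have : D.k ≤ D.s * D.k := Nat.le_mul_of_pos_left _ hs
    omega
  | .inr R => by
    simp only [Set.ncard_setOf_sum, planeIncid, Set.ofPred_false, Set.ncard_empty, zero_add]
    rw [ncard_setOf_subtype (classesOf S) (· ∈ R.1), filter_mem_eq_inter,
      inter_eq_right.mpr (subset_classesOf R.2), (hS.isResolution R.1 R.2).card_eq hk]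

theorem natCard_planePoint (hS : IsCompatibleFamily D S) (hs : 0 < D.s) (hk : 2 ≤ D.k)
    (hcard : #S = (D.s * D.k - D.k + 1) * D.s) :
    Nat.card (PlanePoint D S) = D.s * D.k * (D.s * D.k) + D.s * D.k + 1 := by
  rw [Nat.card_sum, Nat.card_eq_finsetCard, Nat.card_eq_finsetCard, D.card_X,
    hS.card_classesOf hs hk hcard]
  have : D.s ≤ D.s * D.k := Nat.le_mul_of_pos_right _ (by omega)
  have : D.k ≤ D.s * D.k := Nat.le_mul_of_pos_left _ hs
  zify [*]
  ring

theorem natCard_planeLine (hs : 0 < D.s) (hk : 2 ≤ D.k)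
    (hcard : #S = (D.s * D.k - D.k + 1) * D.s) :
    Nat.card (PlaneLine D S) = D.s * D.k * (D.s * D.k) + D.s * D.k + 1 := by
  rw [Nat.card_sum, Nat.card_eq_finsetCard, Nat.card_eq_finsetCard, D.card_blocks hk, hcard]
  have : D.s ≤ D.s * D.k := Nat.le_mul_of_pos_right _ (by omega)
  have : D.k ≤ D.s * D.k := Nat.le_mul_of_pos_left _ hs
  zify [*]
  ring

def planeOfResolutions (hS : IsCompatibleFamily D S) (hs : 0 < D.s) (hk : 2 ≤ D.k)
    (hcard : #S = (D.s * D.k - D.k + 1) * D.s) : ProjPlane (PlanePoint D S) (PlaneLine D S) :=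
  .ofIncidence (planeIncid D S) (D.s * D.k) (planeIncid_unique hS hs hk)
    (ncard_planeIncid_point hS hs hk hcard) (ncard_planeIncid_line hS hs hk hcard)
    (natCard_planePoint hS hs hk hcard) (natCard_planeLine hs hk hcard)

theorem exists_isArcEmbedding_planeOfResolutions (hS : IsCompatibleFamily D S) (hs : 0 < D.s)
    (hk : 2 ≤ D.k) (hcard : #S = (D.s * D.k - D.k + 1) * D.s) :
    ∃ f, IsArcEmbedding D (planeOfResolutions hS hs hk hcard) f := by
  classical
  obtain ⟨x₀, hx₀⟩ : D.X.Nonempty := card_pos.mp (by rw [D.card_X]; positivity)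
  let f : α → PlanePoint D S := fun x => .inl (if hx : x ∈ D.X then ⟨x, hx⟩ else ⟨x₀, hx₀⟩)
  have hf : ∀ x (hx : x ∈ D.X), f x = .inl ⟨x, hx⟩ := fun x hx => by simp [f, hx]
  have htrace_block : ∀ b : {b // b ∈ D.B}, lineTrace D (planeOfResolutions hS hs hk hcard) f
      (.inl b) = b.1 := fun b => by
    ext x
    rw [mem_lineTrace]
    constructor
    · rintro ⟨hx, hxb⟩
      rwa [hf x hx] at hxb
    · intro hxb
      have hx := D.blocks_sub b.1 b.2 hxb
      refine ⟨hx, ?_⟩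
      rwa [hf x hx]
  have htrace_res : ∀ R : {R // R ∈ S}, lineTrace D (planeOfResolutions hS hs hk hcard) f
      (.inr R) = ∅ := fun R => eq_empty_of_forall_notMem fun x hx => by
    obtain ⟨hx, hxR⟩ := mem_lineTrace.mp hx
    rw [hf x hx] at hxR
    exact hxR
  refine ⟨f, fun x hx y hy hxy => ?_, ?_, fun b hb => ⟨.inl ⟨b, hb⟩, htrace_block ⟨b, hb⟩⟩⟩
  · rw [hf x hx, hf y hy] at hxy
    exact congrArg Subtype.val (Sum.inl_injective hxy)
  · rintro (b | R) hne
    · rw [htrace_block]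
      exact b.2
    · rw [htrace_res] at hne
      exact absurd hne not_nonempty_empty

end PlaneOfResolutions

section ResolutionsOfArc

variable {α : Type} [DecidableEq α] {P L : Type}

open Classical in
noncomputable def classAt (D : ArcDesign α) (Pl : ProjPlane P L) (f : α → P) (p : P) :
    Finset (Finset α) :=
  {b ∈ D.B | ∃ l, Pl.incid p l ∧ lineTrace D Pl f l = b}

open Classical in
noncomputable def resolutionAlong [Fintype P] (D : ArcDesign α) (Pl : ProjPlane P L)
    (f : α → P) (l : L) : Finset (Finset (Finset α)) :=
  ({p | Pl.incid p l} : Finset P).image (classAt D Pl f)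

variable {D : ArcDesign α} {Pl : ProjPlane P L} {f : α → P}

theorem mem_classAt {p : P} {b : Finset α} :
    b ∈ classAt D Pl f p ↔ b ∈ D.B ∧ ∃ l, Pl.incid p l ∧ lineTrace D Pl f l = b := by
  classical
  rw [classAt, mem_filter]

theorem mem_resolutionAlong [Fintype P] {l : L} {C : Finset (Finset α)} :
    C ∈ resolutionAlong D Pl f l ↔ ∃ p, Pl.incid p l ∧ classAt D Pl f p = C := by
  classical
  simp [resolutionAlong]

theorem notMem_image_of_lineTrace_eq_empty {l : L} (hl : lineTrace D Pl f l = ∅) {p : P}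
    (hp : Pl.incid p l) : p ∉ f '' D.X := by
  rintro ⟨x, hx, rfl⟩
  exact notMem_empty x (hl ▸ mem_lineTrace.mpr ⟨hx, hp⟩)

namespace IsArcEmbedding

theorem eq_of_lineTrace_eq (hf : IsArcEmbedding D Pl f) (hk : 2 ≤ D.k) {l l' : L}
    (hl : lineTrace D Pl f l ∈ D.B) (h : lineTrace D Pl f l = lineTrace D Pl f l') : l = l' := by
  obtain ⟨x, hx, y, hy, hxy⟩ := one_lt_card.mp (by rw [D.blocks_card _ hl]; omega)
  have hx' := h ▸ hx
  have hy' := h ▸ hy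
  rw [mem_lineTrace] at hx hy hx' hy'
  exact (Pl.eq_or_eq_of_incid hx.2 hy.2 hx'.2 hy'.2).resolve_left
    fun hfxy => hxy (hf.injOn hx.1 hy.1 hfxy)

theorem isParallelClass_classAt (hf : IsArcEmbedding D Pl f) {p : P} (hp : p ∉ f '' D.X) :
    IsParallelClass D (classAt D Pl f p) := by
  refine ⟨fun b hb => (mem_classAt.mp hb).1, fun x hx => ?_⟩
  have hne : f x ≠ p := fun h => hp ⟨x, hx, h⟩
  obtain ⟨l, ⟨hxl, hpl⟩, hl_unique⟩ := Pl.join (f x) p hne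
  have hxt : x ∈ lineTrace D Pl f l := mem_lineTrace.mpr ⟨hx, hxl⟩
  refine ⟨lineTrace D Pl f l, ⟨mem_classAt.mpr ⟨hf.lineTrace_mem l ⟨x, hxt⟩, l, hpl, rfl⟩, hxt⟩,
    ?_⟩
  rintro b ⟨hb, hxb⟩
  obtain ⟨-, l', hpl', rfl⟩ := mem_classAt.mp hb
  rw [hl_unique l' ⟨(mem_lineTrace.mp hxb).2, hpl'⟩]

/-- A block in both classes lies on the line through `p` and `p'`. -/
theorem card_inter_classAt_le_one (hf : IsArcEmbedding D Pl f) (hk : 2 ≤ D.k) {p p' : P}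
    (hne : p ≠ p') :
    #(classAt D Pl f p ∩ classAt D Pl f p') ≤ 1 := by
  have hline : ∀ b ∈ classAt D Pl f p ∩ classAt D Pl f p', ∃ l, Pl.incid p l ∧
      Pl.incid p' l ∧ lineTrace D Pl f l = b := fun b hb => by
    rw [mem_inter, mem_classAt, mem_classAt] at hb
    obtain ⟨⟨hb, l, hpl, rfl⟩, -, l', hpl', hll'⟩ := hb
    exact ⟨l, hpl, hf.eq_of_lineTrace_eq hk hb hll'.symm ▸ hpl', rfl⟩
  refine card_le_one.mpr fun b hb b' hb' => ?_
  obtain ⟨l, hpl, hp'l, rfl⟩ := hline b hb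
  obtain ⟨l', hpl', hp'l', rfl⟩ := hline b' hb'
  rw [(Pl.eq_or_eq_of_incid hpl hp'l hpl' hp'l').resolve_left hne]

theorem classAt_injOn (hf : IsArcEmbedding D Pl f) (hs : 0 < D.s) (hk : 2 ≤ D.k) :
    Set.InjOn (classAt D Pl f) (f '' D.X)ᶜ := by
  intro p hp p' _ heq
  by_contra hne
  have h := hf.card_inter_classAt_le_one hk hne
  rw [← heq, inter_self, (hf.isParallelClass_classAt hp).card_eq (by omega)] at h
  have : D.s * 2 ≤ D.s * D.k := Nat.mul_le_mul_left _ hk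
  omega

/-- The lines meeting the arc correspond to the blocks, and there are `q * q + q + 1` lines. -/
theorem card_exterior_lines [Fintype L] (hf : IsArcEmbedding D Pl f) (hs : 0 < D.s)
    (hk : 2 ≤ D.k) (hq : Pl.q = D.s * D.k) :
    #{l | lineTrace D Pl f l = ∅} = (D.s * D.k - D.k + 1) * D.s := by
  classical
  have hsecant : #{l | lineTrace D Pl f l ≠ ∅} = #D.B := by
    have hmem : ∀ l ∈ ({l | lineTrace D Pl f l ≠ ∅} : Finset L), lineTrace D Pl f l ∈ D.B :=
      fun l hl => hf.lineTrace_mem l (nonempty_iff_ne_empty.mpr (mem_filter.mp hl).2)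
    refine card_nbij (lineTrace D Pl f) hmem
      (fun l hl l' _ h => hf.eq_of_lineTrace_eq hk (hmem l hl) h) fun b hb => ?_
    obtain ⟨l, rfl⟩ := hf.exists_lineTrace_eq b hb
    exact ⟨l, mem_filter.mpr ⟨mem_univ l, (D.nonempty_of_mem (by omega) hb).ne_empty⟩, rfl⟩
  obtain ⟨b₀, hb₀⟩ := card_pos.mp (by rw [D.card_blocks hk]; positivity : 0 < #D.B)
  obtain ⟨l₀, -⟩ := hf.exists_lineTrace_eq b₀ hb₀
  have hsplit := card_filter_add_card_filter_not (s := univ) (p := fun l => lineTrace D Pl f l = ∅)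
  rw [hsecant, card_univ, ← Nat.card_eq_fintype_card, Pl.natCard_lines l₀, hq,
    D.card_blocks hk] at hsplit
  have : D.s ≤ D.s * D.k := Nat.le_mul_of_pos_right _ (by omega)
  have : D.k ≤ D.s * D.k := Nat.le_mul_of_pos_left _ hs
  zify [*] at hsplit ⊢
  linear_combination hsplit

section

variable [Fintype P]

theorem isResolution_resolutionAlong (hf : IsArcEmbedding D Pl f) (hk : 2 ≤ D.k) {l : L}
    (hl : lineTrace D Pl f l = ∅) :
    IsResolution D (resolutionAlong D Pl f l) := by
  refine ⟨fun C hC => ?_, fun b hb => ?_⟩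
  · obtain ⟨p, hpl, rfl⟩ := mem_resolutionAlong.mp hC
    exact hf.isParallelClass_classAt (notMem_image_of_lineTrace_eq_empty hl hpl)
  · obtain ⟨m, rfl⟩ := hf.exists_lineTrace_eq b hb
    have hml : m ≠ l := by
      rintro rfl
      exact (D.nonempty_of_mem (by omega) hb).ne_empty hl
    obtain ⟨p, ⟨hpm, hpl⟩, hp_unique⟩ := Pl.meet m l hml
    refine ⟨classAt D Pl f p, ⟨mem_resolutionAlong.mpr ⟨p, hpl, rfl⟩,
      mem_classAt.mpr ⟨hb, m, hpm, rfl⟩⟩, ?_⟩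
    rintro C ⟨hC, hbC⟩
    obtain ⟨p', hp'l, rfl⟩ := mem_resolutionAlong.mp hC
    obtain ⟨-, m', hp'm', hm'⟩ := mem_classAt.mp hbC
    rw [hp_unique p' ⟨hf.eq_of_lineTrace_eq hk hb hm'.symm ▸ hp'm', hp'l⟩]

theorem compatible_resolutionAlong (hf : IsArcEmbedding D Pl f) (hk : 2 ≤ D.k) {l l' : L}
    (hne : l ≠ l') :
    Compatible D (resolutionAlong D Pl f l) (resolutionAlong D Pl f l') := by
  obtain ⟨p₀, ⟨hp₀l, hp₀l'⟩, hp₀_unique⟩ := Pl.meet l l' hne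
  refine ⟨classAt D Pl f p₀, mem_resolutionAlong.mpr ⟨p₀, hp₀l, rfl⟩,
    mem_resolutionAlong.mpr ⟨p₀, hp₀l', rfl⟩, fun C₁ hC₁ C₂ hC₂ hnot => ?_⟩
  obtain ⟨p₁, hp₁l, rfl⟩ := mem_resolutionAlong.mp hC₁
  obtain ⟨p₂, hp₂l', rfl⟩ := mem_resolutionAlong.mp hC₂
  refine hf.card_inter_classAt_le_one hk fun h => hnot ?_
  subst h
  rw [hp₀_unique p₁ ⟨hp₁l, hp₂l'⟩]
  exact ⟨rfl, rfl⟩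

theorem resolutionAlong_injOn (hf : IsArcEmbedding D Pl f) (hs : 0 < D.s) (hk : 2 ≤ D.k)
    (hq : 0 < Pl.q) :
    Set.InjOn (resolutionAlong D Pl f) {l | lineTrace D Pl f l = ∅} := by
  intro l hl l' hl' heq
  by_contra hne
  obtain ⟨p₀, ⟨hp₀l, hp₀l'⟩, hp₀_unique⟩ := Pl.meet l l' hne
  obtain ⟨p, hpl, hpp₀⟩ := Pl.exists_incid_ne hq l p₀
  obtain ⟨p', hp'l', hpp'⟩ := mem_resolutionAlong.mp
    (heq ▸ mem_resolutionAlong.mpr ⟨p, hpl, rfl⟩ : classAt D Pl f p ∈ resolutionAlong D Pl f l')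
  have := hf.classAt_injOn hs hk (notMem_image_of_lineTrace_eq_empty hl' hp'l')
    (notMem_image_of_lineTrace_eq_empty hl hpl) hpp'
  exact hpp₀ (hp₀_unique p ⟨hpl, this ▸ hp'l'⟩)

end

theorem exists_isCompatibleFamily (hf : IsArcEmbedding D Pl f) (hs : 0 < D.s) (hk : 2 ≤ D.k)
    (hq : Pl.q = D.s * D.k) :
    ∃ S, #S = (D.s * D.k - D.k + 1) * D.s ∧ IsCompatibleFamily D S := by
  classical
  have := Pl.finP
  have := Pl.finL
  have := Fintype.ofFinite P
  have := Fintype.ofFinite L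
  refine ⟨({l | lineTrace D Pl f l = ∅} : Finset L).image (resolutionAlong D Pl f), ?_, ⟨?_, ?_⟩⟩
  · rw [card_image_of_injOn, hf.card_exterior_lines hs hk hq]
    exact (hf.resolutionAlong_injOn hs hk (by rw [hq]; positivity)).mono fun l hl => by
      simpa using hl
  · intro R hR
    obtain ⟨l, hl, rfl⟩ := mem_image.mp hR
    exact hf.isResolution_resolutionAlong hk (mem_filter.mp hl).2
  · intro R₁ hR₁ R₂ hR₂ hne
    obtain ⟨l₁, -, rfl⟩ := mem_image.mp hR₁
    obtain ⟨l₂, -, rfl⟩ := mem_image.mp hR₂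
    exact hf.compatible_resolutionAlong hk fun h => hne (h ▸ rfl)

end IsArcEmbedding

end ResolutionsOfArc

/-- A 2-((sk-s+1)k, k, 1) design admits a set of (sk-k+1)·s pairwise
compatible resolutions if and only if there is a projective plane of order
q = sk in which it is embeddable as a maximal arc of degree k. -/
theorem compatible_resolutions_iff_embeddable {α : Type} [DecidableEq α]
    (D : ArcDesign α) (hs : 2 ≤ D.s) (hk : 2 ≤ D.k) :
    (∃ S : Finset (Finset (Finset (Finset α))),
        S.card = (D.s * D.k - D.k + 1) * D.s ∧
        (∀ R ∈ S, IsResolution D R) ∧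
        (∀ R₁ ∈ S, ∀ R₂ ∈ S, R₁ ≠ R₂ → Compatible D R₁ R₂)) ↔
    (∃ (P L : Type) (Pl : ProjPlane P L), Pl.q = D.s * D.k ∧
        EmbeddableAsMaxArc D Pl) := by
  have hs_pos : 0 < D.s := by omega
  constructor
  · rintro ⟨S, hcard, hres, hcomp⟩
    have hS : IsCompatibleFamily D S := ⟨hres, hcomp⟩
    exact ⟨_, _, planeOfResolutions hS hs_pos hk hcard, rfl,
      (embeddableAsMaxArc_iff (by omega)).mpr
        (exists_isArcEmbedding_planeOfResolutions hS hs_pos hk hcard)⟩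
  · rintro ⟨P, L, Pl, hq, hE⟩
    obtain ⟨f, hf⟩ := (embeddableAsMaxArc_iff (by omega)).mp hE
    obtain ⟨S, hcard, hS⟩ := hf.exists_isCompatibleFamily hs_pos hk hq
    exact ⟨S, hcard, hS.isResolution, hS.compatible⟩
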